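/- arXiv:1402.2038 — 2 statements merged into one kernel-verified Lean document; each statement's English description precedes it below -/
import Mathlib

section
/- Let s be smooth with s ≠ 0 near r = δ, and let u_r, u_θ be smooth functions of (r, θ) with ∂_r(s u_r) + ∂_θ u_θ = 0 and u_r(δ,θ) = u_θ(δ,θ) = 0 for all θ. Define G(r,θ) = u_r ∂_r u_θ + u_θ u_r (s'(r)/s(r)) + (1/s(r)) u_θ ∂_θ u_θ. Then ∂_r G(δ, θ) = 0 for all θ. -/
noncomputable section

/-- Partial derivative in the first (radial) variable. -/
def pr (f : ℝ → ℝ → ℝ) : ℝ → ℝ → ℝ := fun r θ => deriv (fun x => f x θ) r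

/-- Partial derivative in the second (angular) variable. -/
def pθ (f : ℝ → ℝ → ℝ) : ℝ → ℝ → ℝ := fun r θ => deriv (fun y => f r y) θ

/-- Smoothness of a function of two real variables. -/
def Smooth2 (f : ℝ → ℝ → ℝ) : Prop := ContDiff ℝ (⊤ : ℕ∞) (fun p : ℝ × ℝ => f p.1 p.2)

lemma slice_contDiff {f : ℝ → ℝ → ℝ} (hf : Smooth2 f) (θ : ℝ) :
    ContDiff ℝ (⊤ : ℕ∞) (fun x => f x θ) :=
  hf.comp (contDiff_id.prodMk contDiff_const)

lemma pr_eq_fderiv {f : ℝ → ℝ → ℝ} (hf : Smooth2 f) (r θ : ℝ) :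
    pr f r θ = fderiv ℝ (fun p : ℝ × ℝ => f p.1 p.2) (r, θ) (1, 0) := by
  have h1 : HasDerivAt (fun x : ℝ => (x, θ)) ((1 : ℝ), (0 : ℝ)) r := by
    simpa using (hasDerivAt_id r).prodMk (hasDerivAt_const r θ)
  have h2 := ((hf.differentiable (by simp) (r, θ)).hasFDerivAt).comp_hasDerivAt r h1
  exact h2.deriv

lemma pθ_eq_fderiv {f : ℝ → ℝ → ℝ} (hf : Smooth2 f) (r θ : ℝ) :
    pθ f r θ = fderiv ℝ (fun p : ℝ × ℝ => f p.1 p.2) (r, θ) (0, 1) := by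
  have h1 : HasDerivAt (fun y : ℝ => (r, y)) ((0 : ℝ), (1 : ℝ)) θ := by
    simpa using (hasDerivAt_const θ r).prodMk (hasDerivAt_id θ)
  have h2 := ((hf.differentiable (by simp) (r, θ)).hasFDerivAt).comp_hasDerivAt θ h1
  exact h2.deriv

lemma pr_slice_contDiff {f : ℝ → ℝ → ℝ} (hf : Smooth2 f) (θ : ℝ) :
    ContDiff ℝ (⊤ : ℕ∞) (fun r => pr f r θ) := by
  have h2 : ContDiff ℝ (⊤ : ℕ∞) (fderiv ℝ (fun p : ℝ × ℝ => f p.1 p.2)) :=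
    hf.fderiv_right (by simp)
  have h3 : ContDiff ℝ (⊤ : ℕ∞)
      (fun r : ℝ => fderiv ℝ (fun p : ℝ × ℝ => f p.1 p.2) (r, θ) ((1 : ℝ), (0 : ℝ))) :=
    (h2.comp (contDiff_id.prodMk contDiff_const)).clm_apply contDiff_const
  have heq : (fun r => pr f r θ)
      = fun r : ℝ => fderiv ℝ (fun p : ℝ × ℝ => f p.1 p.2) (r, θ) ((1 : ℝ), (0 : ℝ)) :=
    funext fun r => pr_eq_fderiv hf r θ
  exact heq ▸ h3

lemma pθ_slice_contDiff {f : ℝ → ℝ → ℝ} (hf : Smooth2 f) (θ : ℝ) :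
    ContDiff ℝ (⊤ : ℕ∞) (fun r => pθ f r θ) := by
  have h2 : ContDiff ℝ (⊤ : ℕ∞) (fderiv ℝ (fun p : ℝ × ℝ => f p.1 p.2)) :=
    hf.fderiv_right (by simp)
  have h3 : ContDiff ℝ (⊤ : ℕ∞)
      (fun r : ℝ => fderiv ℝ (fun p : ℝ × ℝ => f p.1 p.2) (r, θ) ((0 : ℝ), (1 : ℝ))) :=
    (h2.comp (contDiff_id.prodMk contDiff_const)).clm_apply contDiff_const
  have heq : (fun r => pθ f r θ)
      = fun r : ℝ => fderiv ℝ (fun p : ℝ × ℝ => f p.1 p.2) (r, θ) ((0 : ℝ), (1 : ℝ)) :=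
    funext fun r => pθ_eq_fderiv hf r θ
  exact heq ▸ h3

/-- the normal derivative of the tangential component
`G = u_r ∂_r u_θ + u_θ u_r (s'/s) + (1/s) u_θ ∂_θ u_θ` of the convection term `∇_u u`
vanishes on the no-slip boundary circle `r = δ`. -/
theorem convection_normal_derivative_vanishes
    (s : ℝ → ℝ) (δ : ℝ) (hs : ContDiff ℝ (⊤ : ℕ∞) s)
    (hs0 : ∀ᶠ r in nhds δ, s r ≠ 0)
    (ur uθ : ℝ → ℝ → ℝ) (hur : Smooth2 ur) (huθ : Smooth2 uθ)
    (hdiv : ∀ r θ, pr (fun r θ => s r * ur r θ) r θ + pθ uθ r θ = 0)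
    (hbr : ∀ θ, ur δ θ = 0) (hbθ : ∀ θ, uθ δ θ = 0)
    (G : ℝ → ℝ → ℝ)
    (hG : G = fun r θ => ur r θ * pr uθ r θ + uθ r θ * ur r θ * (deriv s r / s r)
        + (1 / s r) * uθ r θ * pθ uθ r θ) :
    ∀ θ, pr G δ θ = 0 := by
  intro θ
  have hsδ : s δ ≠ 0 := hs0.self_of_nhds
  -- slice functions
  set a : ℝ → ℝ := fun r => ur r θ with ha_def
  set b : ℝ → ℝ := fun r => uθ r θ with hb_def
  set c : ℝ → ℝ := fun r => pr uθ r θ with hc_def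
  set d : ℝ → ℝ := fun r => pθ uθ r θ with hd_def
  have haC : ContDiff ℝ (⊤ : ℕ∞) a := slice_contDiff hur θ
  have hbC : ContDiff ℝ (⊤ : ℕ∞) b := slice_contDiff huθ θ
  have hcC : ContDiff ℝ (⊤ : ℕ∞) c := pr_slice_contDiff huθ θ
  have hdC : ContDiff ℝ (⊤ : ℕ∞) d := pθ_slice_contDiff huθ θ
  have hsD : DifferentiableAt ℝ s δ := hs.differentiable (by simp) δ
  have hs'C : ContDiff ℝ (⊤ : ℕ∞) (deriv s) :=
    (contDiff_infty_iff_deriv.mp (hs.of_le (by simp))).2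
  -- boundary values
  have haδ : a δ = 0 := hbr θ
  have hbδ : b δ = 0 := hbθ θ
  have hdδ : d δ = 0 := by
    have : (fun y => uθ δ y) = fun _ => (0 : ℝ) := funext hbθ
    simp [hd_def, pθ, this]
  -- derivative of a at δ vanishes, from the divergence-free condition
  have ha : HasDerivAt a (deriv a δ) δ := (haC.differentiable (by simp) δ).hasDerivAt
  have ha'0 : deriv a δ = 0 := by
    have hprod : HasDerivAt (fun x => s x * ur x θ)
        (deriv s δ * a δ + s δ * deriv a δ) δ := hsD.hasDerivAt.mul ha
    have hdiv' := hdiv δ θ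
    have hθ0 : pθ uθ δ θ = 0 := hdδ
    have hpr : pr (fun r θ => s r * ur r θ) δ θ = deriv s δ * a δ + s δ * deriv a δ :=
      hprod.deriv
    rw [hpr, hθ0, add_zero, haδ, mul_zero, zero_add] at hdiv'
    exact (mul_eq_zero.mp hdiv').resolve_left hsδ
  -- HasDerivAt for remaining pieces
  have hb : HasDerivAt b (deriv b δ) δ := (hbC.differentiable (by simp) δ).hasDerivAt
  have hc : HasDerivAt c (deriv c δ) δ := (hcC.differentiable (by simp) δ).hasDerivAt
  have hd : HasDerivAt d (deriv d δ) δ := (hdC.differentiable (by simp) δ).hasDerivAt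
  have hq : HasDerivAt (fun r => deriv s r / s r)
      (deriv (fun r => deriv s r / s r) δ) δ :=
    (((hs'C.differentiable (by simp) δ).div hsD hsδ)).hasDerivAt
  have he : HasDerivAt (fun r => 1 / s r) (deriv (fun r => 1 / s r) δ) δ :=
    ((differentiableAt_const (1:ℝ)).div hsD hsδ).hasDerivAt
  -- assemble the derivative of G(·,θ)
  have hGd : HasDerivAt (fun r => G r θ)
      ((deriv a δ * c δ + a δ * deriv c δ)
        + (((deriv b δ * a δ + b δ * deriv a δ) * (deriv s δ / s δ)
            + b δ * a δ * deriv (fun r => deriv s r / s r) δ)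
          + ((deriv (fun r => 1 / s r) δ * b δ + (1 / s δ) * deriv b δ) * d δ
            + (1 / s δ) * b δ * deriv d δ))) δ := by
    have := ((ha.mul hc).add (((hb.mul ha).mul hq).add ((he.mul hb).mul hd)))
    rw [hG]
    refine this.congr_of_eventuallyEq (Filter.Eventually.of_forall fun r => ?_)
    simp only [Pi.mul_apply, Pi.add_apply, ha_def, hb_def, hc_def, hd_def]
    ring
  have : pr G δ θ = _ := hGd.deriv
  rw [this]
  simp [haδ, hbδ, hdδ, ha'0]
end
end

section
/- Let s be smooth and nonvanishing near r = δ with s' = c, and let u_r, u_θ be smooth with ∂_r(s u_r) + ∂_θ u_θ = 0 and u_r(δ,θ) = u_θ(δ,θ) = 0 for all θ. Define D₁(r,θ) = (1/s(r)²)(∂_θ² u_r - c(r) ∂_θ u_θ - s(r) ∂_r ∂_θ u_θ). Then D₁(δ, θ) = ∂_r² u_r(δ, θ) for all θ. -/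
noncomputable section

lemma smooth2_sect1 {f : ℝ → ℝ → ℝ} (h : Smooth2 f) (θ : ℝ) :
    ContDiff ℝ (⊤ : ℕ∞) (fun x => f x θ) :=
  h.comp (contDiff_id.prodMk contDiff_const)

/-- on the no-slip boundary circle `r = δ`, the normal component
`D₁ = (1/s²)(∂_θ² u_r - c ∂_θ u_θ - s ∂_r ∂_θ u_θ)` (with `c = s'`) of the Hodge Laplacian
of a divergence-free field reduces to `∂_r² u_r`. -/
theorem laplacian_normal_component_on_boundary
    (s c : ℝ → ℝ) (δ : ℝ) (hs : ContDiff ℝ (⊤ : ℕ∞) s)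
    (hc : c = deriv s)
    (hs0 : ∀ᶠ r in nhds δ, s r ≠ 0)
    (ur uθ : ℝ → ℝ → ℝ) (hur : Smooth2 ur) (huθ : Smooth2 uθ)
    (hdiv : ∀ r θ, pr (fun r θ => s r * ur r θ) r θ + pθ uθ r θ = 0)
    (hbr : ∀ θ, ur δ θ = 0) (hbθ : ∀ θ, uθ δ θ = 0)
    (D₁ : ℝ → ℝ → ℝ)
    (hD₁ : D₁ = fun r θ => (1 / (s r) ^ 2)
        * (pθ (pθ ur) r θ - c r * pθ uθ r θ - s r * pr (pθ uθ) r θ)) :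
    ∀ θ, D₁ δ θ = pr (pr ur) δ θ := by
  intro θ
  have hsδ : s δ ≠ 0 := hs0.self_of_nhds
  have hsdiff : Differentiable ℝ s := hs.differentiable (by simp)
  have hs'cd : ContDiff ℝ ((⊤ : ℕ∞) : WithTop ℕ∞) (deriv s) := (contDiff_infty_iff_deriv.mp (hs.of_le (by simp))).2
  -- θ-derivatives on the boundary vanish
  have hθur : ∀ y, pθ ur δ y = 0 := by
    intro y
    have : (fun y' => ur δ y') = fun _ => (0 : ℝ) := funext hbr
    simp [pθ, this]
  have hθθur : pθ (pθ ur) δ θ = 0 := by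
    have h2 : (fun y => pθ ur δ y) = fun _ => (0 : ℝ) := funext hθur
    show deriv (fun y => pθ ur δ y) θ = 0
    rw [h2]; simp
  have hθuθ : ∀ y, pθ uθ δ y = 0 := by
    intro y
    have : (fun y' => uθ δ y') = fun _ => (0 : ℝ) := funext hbθ
    simp [pθ, this]
  -- the section f x = ur x θ
  set f : ℝ → ℝ := fun x => ur x θ with hf
  have hfcd : ContDiff ℝ (⊤ : ℕ∞) f := smooth2_sect1 hur θ
  have hfdiff : Differentiable ℝ f := hfcd.differentiable (by simp)
  have hf'cd : ContDiff ℝ ((⊤ : ℕ∞) : WithTop ℕ∞) (deriv f) := (contDiff_infty_iff_deriv.mp (hfcd.of_le (by simp))).2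
  have hf'diff : Differentiable ℝ (deriv f) := hf'cd.differentiable (by simp)
  -- expand pr (s * ur)
  have hprsur : ∀ r, pr (fun r θ => s r * ur r θ) r θ
      = deriv s r * f r + s r * deriv f r := by
    intro r
    simpa [pr] using deriv_fun_mul (hsdiff r) (hfdiff r)
  -- pr ur δ θ = 0 from divergence-free condition at δ
  have hprur : deriv f δ = 0 := by
    have h := hdiv δ θ
    rw [hprsur δ, hθuθ θ] at h
    have hb : f δ = 0 := hbr θ
    rw [hb] at h
    have : s δ * deriv f δ = 0 := by linarith
    exact (mul_eq_zero.mp this).resolve_left hsδ |>.symm ▸ rfl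
  -- key: pr (pθ uθ) δ θ = - s δ * pr (pr ur) δ θ
  have hkey : pr (pθ uθ) δ θ = - (s δ * pr (pr ur) δ θ) := by
    have heq : (fun r => pθ uθ r θ)
        = fun r => -(deriv s r * f r + s r * deriv f r) := by
      funext r
      have h := hdiv r θ
      rw [hprsur r] at h
      linarith
    have hfδ : f δ = 0 := hbr θ
    have hA : Differentiable ℝ (fun r => deriv s r * f r) :=
      (hs'cd.differentiable (by simp)).mul hfdiff
    have hB : Differentiable ℝ (fun r => s r * deriv f r) :=
      hsdiff.mul hf'diff
    have : pr (pθ uθ) δ θ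
        = - deriv (fun r => deriv s r * f r + s r * deriv f r) δ := by
      rw [pr, heq]
      exact deriv.neg
    rw [this, deriv_fun_add (hA δ) (hB δ),
      deriv_fun_mul (hs'cd.differentiable (by simp) δ) (hfdiff δ),
      deriv_fun_mul (hsdiff δ) (hf'diff δ), hfδ, hprur]
    have : pr (pr ur) δ θ = deriv (deriv f) δ := rfl
    rw [this]
    ring
  rw [hD₁]
  simp only [hθθur, hθuθ θ, hkey]
  field_simp
  ring
end
end
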